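/- arXiv:0803.3550 — 3 statements merged into one kernel-verified Lean document; each statement's English description precedes it below -/
import Mathlib

section
/- Let P(x) be a formal power series over ℚ with P(0) = 1 such that P is a polynomial of degree u > 0 (i.e., P ≠ 1 has finitely many nonzero coefficients, the top one in degree u). Then the logarithmic derivative P'(x)/P(x), viewed as a formal power series, has infinitely many nonzero coefficients. -/
/-!
If `P'/P` had only finitely many nonzero coefficients it would be a polynomial `Q` with
`Q * P = P'`, i.e. `P ∣ P'`. Since `deg P' < deg P`, this forces `P' = 0`, which in
characteristic zero means that `P` is constant.
-/

open Polynomial PowerSeries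

namespace PowerSeries

theorem exists_coe_eq_of_finite_coeff_ne_zero {R : Type*} [Semiring R] {f : R⟦X⟧}
    (hf : {i : ℕ | coeff i f ≠ 0}.Finite) : ∃ p : R[X], (p : R⟦X⟧) = f := by
  obtain ⟨n, hn⟩ := hf.bddAbove
  refine ⟨trunc (n + 1) f, ext fun i => ?_⟩
  rw [Polynomial.coeff_coe, coeff_trunc]
  split_ifs with hi
  · rfl
  · by_contra hne
    exact hi (Nat.lt_succ_of_le (hn (Ne.symm hne)))

end PowerSeries

/-- Let `P` be a polynomial over `ℚ` with constant term `1` and degree `u > 0`.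
Then the logarithmic derivative `P'/P`, viewed as a formal power series,
has infinitely many nonzero coefficients. -/
theorem logDeriv_proper (P : Polynomial ℚ) (u : ℕ) (hu : 0 < u)
    (hdeg : P.natDegree = u) (h0 : P.coeff 0 = 1) :
    {i : ℕ | PowerSeries.coeff (R := ℚ) i
        ((↑(Polynomial.derivative P) : PowerSeries ℚ) * (↑P : PowerSeries ℚ)⁻¹) ≠ 0}.Infinite := by
  intro hfin
  obtain ⟨Q, hQ⟩ := exists_coe_eq_of_finite_coeff_ne_zero hfin
  have hP_const : constantCoeff (P : ℚ⟦X⟧) ≠ 0 := by simp [h0]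
  have hQP : Q * P = derivative P := by
    apply Polynomial.coe_injective
    rw [Polynomial.coe_mul, hQ, mul_assoc, PowerSeries.inv_mul_cancel _ hP_const, mul_one]
  have hdvd : P ∣ derivative P := Dvd.intro_left Q hQP
  rw [dvd_derivative_iff, derivative_eq_zero] at hdvd
  omega
end

section
/- Let a : ℕ → ℤ be a function with a_d = 0 for all d > v (where v ≥ 1), and define f(m) = ∑_{d ∣ m} a_d · d · θ(m/d), where θ(n) = ∑_{e ∣ n} e·μ(e). Then for every pair of positive integers s, t, there exists a positive integer N such that 2^t divides f(N+i) for all 1 ≤ i ≤ s. -/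
/-- `θ(n) = ∑_{e ∣ n} e · μ(e)`, where `μ` is the Möbius function. -/
def theta (n : ℕ) : ℤ :=
  ∑ e ∈ n.divisors, (e : ℤ) * ArithmeticFunction.moebius e

/-- `f(m) = ∑_{d ∣ m} a_d · d · θ(m/d)`. -/
def convTheta (a : ℕ → ℤ) (m : ℕ) : ℤ :=
  ∑ d ∈ m.divisors, a d * d * theta (m / d)

/-!
`θ` is multiplicative with `θ(p^k) = 1 - p`, so `θ(n) = ∏_{p ∣ n} (1 - p)` and `1 - p ∣ θ(n)` for
every prime `p ∣ n`. If a prime `p > v` divides `m`, then every divisor `d ≤ v` of `m` is prime to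
`p`, so `p ∣ m / d`; hence `1 - p` divides every nonzero term of `f(m)`. By Dirichlet's theorem
there are distinct primes `p₁, …, p_s > v` with `pᵢ ≡ 1 [MOD 2^t]`, and by the Chinese remainder
theorem some `N > 0` has `pᵢ ∣ N + i` for all `i`.
-/

open Finset Function ArithmeticFunction
open scoped ArithmeticFunction.Moebius ArithmeticFunction.zeta

theorem theta_eq_pmul_mul_zeta (n : ℕ) :
    theta n = (pmul (ArithmeticFunction.id : ArithmeticFunction ℤ) μ * ζ) n := by
  rw [coe_mul_zeta_apply, theta]
  simp [pmul_apply]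

theorem isMultiplicative_pmul_id_moebius_mul_zeta :
    (pmul (ArithmeticFunction.id : ArithmeticFunction ℤ) μ * ζ).IsMultiplicative :=
  (isMultiplicative_id.natCast.pmul isMultiplicative_moebius).mul isMultiplicative_zeta.natCast

theorem theta_prime_pow {p k : ℕ} (hp : p.Prime) (hk : k ≠ 0) : theta (p ^ k) = 1 - p := by
  obtain ⟨j, rfl⟩ := Nat.exists_eq_add_one_of_ne_zero hk
  rw [theta, Nat.sum_divisors_prime_pow hp, sum_range_succ', sum_range_succ']
  simp [moebius_apply_prime_pow hp, moebius_apply_prime hp]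
  ring

theorem theta_eq_prod_primeFactors {n : ℕ} (hn : n ≠ 0) :
    theta n = ∏ p ∈ n.primeFactors, (1 - (p : ℤ)) := by
  rw [theta_eq_pmul_mul_zeta,
    isMultiplicative_pmul_id_moebius_mul_zeta.multiplicative_factorization _ hn, Finsupp.prod,
    Nat.support_factorization]
  refine prod_congr rfl fun p hp => ?_
  rw [← theta_eq_pmul_mul_zeta, theta_prime_pow (Nat.prime_of_mem_primeFactors hp)]
  rwa [← Finsupp.mem_support_iff, Nat.support_factorization]

theorem one_sub_dvd_theta {n p : ℕ} (hp : p.Prime) (hpn : p ∣ n) : (1 - p : ℤ) ∣ theta n := by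
  rcases eq_or_ne n 0 with rfl | hn
  · simp [theta]
  rw [theta_eq_prod_primeFactors hn]
  exact dvd_prod_of_mem _ (Nat.mem_primeFactors.2 ⟨hp, hpn, hn⟩)

theorem one_sub_dvd_convTheta {a : ℕ → ℤ} {v p m : ℕ} (ha : ∀ d, v < d → a d = 0)
    (hp : p.Prime) (hvp : v < p) (hpm : p ∣ m) : (1 - p : ℤ) ∣ convTheta a m := by
  refine dvd_sum fun d hd => ?_
  obtain ⟨⟨e, rfl⟩, hm⟩ := Nat.mem_divisors.1 hd
  have hd0 : 0 < d := Nat.pos_of_ne_zero (left_ne_zero_of_mul hm)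
  rcases le_or_gt d v with hdv | hdv
  · have hpe : p ∣ e :=
      (hp.dvd_mul.1 hpm).resolve_left fun hpd => (Nat.le_of_dvd hd0 hpd).not_gt (hdv.trans_lt hvp)
    rw [Nat.mul_div_cancel_left _ hd0]
    exact (one_sub_dvd_theta hp hpe).mul_left _
  · simp [ha d hdv]

theorem Nat.exists_pos_forall_dvd_add {ι : Type*} (S : Finset ι) (d r : ι → ℕ)
    (hd : ∀ i ∈ S, d i ≠ 0) (hcop : (S : Set ι).Pairwise (Nat.Coprime on d)) :
    ∃ N, 0 < N ∧ ∀ i ∈ S, d i ∣ N + r i := by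
  -- `r i * (d i - 1) ≡ -r i [MOD d i]`, written without truncated subtraction
  obtain ⟨k, hk⟩ := Nat.chineseRemainderOfFinset (fun i => r i * (d i - 1)) d S hd hcop
  refine ⟨k + ∏ i ∈ S, d i, ?_, fun i hi => ?_⟩
  · have : 0 < ∏ i ∈ S, d i := prod_pos fun i hi => Nat.pos_of_ne_zero (hd i hi)
    omega
  have hkr : k + r i ≡ 0 [MOD d i] := calc
    k + r i ≡ r i * (d i - 1) + r i [MOD d i] := (hk i hi).add_right _
    _ = r i * d i := by
      rw [← Nat.mul_add_one, Nat.sub_add_cancel (Nat.one_le_iff_ne_zero.2 (hd i hi))]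
    _ ≡ 0 [MOD d i] := Nat.modEq_zero_iff_dvd.2 (dvd_mul_left _ _)
  rw [add_right_comm]
  exact dvd_add (Nat.modEq_zero_iff_dvd.1 hkr) (dvd_prod_of_mem d hi)

theorem convTheta_two_pow_dvd_general (v : ℕ) (a : ℕ → ℤ)
    (ha : ∀ d, v < d → a d = 0) (s t : ℕ) :
    ∃ N : ℕ, 0 < N ∧ ∀ i, 1 ≤ i → i ≤ s → (2 : ℤ) ^ t ∣ convTheta a (N + i) := by
  set P : ℕ → Prop := fun q => q.Prime ∧ v < q ∧ q ≡ 1 [MOD 2 ^ t]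
  have hP : (Set.ofPred P).Infinite :=
    ((Nat.infinite_setOfPred_prime_modEq_one (pow_ne_zero t two_ne_zero)).sdiff
      (Set.finite_Iic v)).mono fun _ hq => ⟨hq.1.1, not_le.1 hq.2, hq.1.2⟩
  have hprime (i : ℕ) : (Nat.nth P i).Prime := (Nat.nth_mem_of_infinite hP i).1
  obtain ⟨N, hN, hdvd⟩ := Nat.exists_pos_forall_dvd_add (Icc 1 s) (Nat.nth P) id
    (fun i _ => (hprime i).ne_zero)
    (fun i _ j _ hij => (Nat.coprime_primes (hprime i) (hprime j)).2
      ((Nat.nth_strictMono hP).injective.ne hij))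
  refine ⟨N, hN, fun i hi hsi => ?_⟩
  obtain ⟨hp, hvp, hmod⟩ := Nat.nth_mem_of_infinite hP i
  have h2t : (2 : ℤ) ^ t ∣ 1 - Nat.nth P i := by exact_mod_cast hmod.dvd
  exact h2t.trans (one_sub_dvd_convTheta ha hp hvp (hdvd i (mem_Icc.2 ⟨hi, hsi⟩)))

/-- Let `a : ℕ → ℤ` with `a_d = 0` for all `d > v` (`v ≥ 1`), and let
`f(m) = ∑_{d ∣ m} a_d · d · θ(m/d)`. Then for every pair of positive integers
`s, t`, there exists a positive integer `N` such that `2^t ∣ f(N+i)` for all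
`1 ≤ i ≤ s`. -/
theorem convTheta_two_pow_dvd (v : ℕ) (hv : 1 ≤ v) (a : ℕ → ℤ)
    (ha : ∀ d, v < d → a d = 0) (s t : ℕ) (hs : 0 < s) (ht : 0 < t) :
    ∃ N : ℕ, 0 < N ∧ ∀ i, 1 ≤ i → i ≤ s → (2 : ℤ) ^ t ∣ convTheta a (N + i) :=
  convTheta_two_pow_dvd_general v a ha s t
end

section
/- Möbius inversion for the graded Euler characteristic: if g(x) = ∑_{m=1}^∞ h(x^m) · (∑_{d ∣ m} μ(d)/d) as formal power series over ℚ with h(0) = 0, then h(x) = ∑_{m=1}^∞ g(x^m) · (∑_{d ∣ m} d·μ(d)/m). -/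
open PowerSeries ArithmeticFunction

/-!
Read the positive coefficients of a power series as an arithmetic function. The hypothesis says
`g = A ∗ h` for Dirichlet convolution, where `A = (μ ∗ id) / id` pointwise. Multiplying or
dividing pointwise by the completely multiplicative `id` is a ring endomorphism of the Dirichlet
ring, so `B = ((id · μ) ∗ ζ) / id` satisfies
`A ∗ B = ((μ ∗ ζ) ∗ (id · ζ ∗ id · μ)) / id = (id · (ζ ∗ μ)) / id = 1`, whence `h = B ∗ g`.
-/

open Finset
open scoped ArithmeticFunction.Moebius ArithmeticFunction.zeta

local notation "ι" => ArithmeticFunction.id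

namespace ArithmeticFunction

section CompletelyMultiplicativeWeight

variable {R : Type*}

theorem pmul_mul_pmul_of_map_mul [CommSemiring R] {χ : ArithmeticFunction R}
    (hχ : ∀ a b : ℕ, χ (a * b) = χ a * χ b) (f g : ArithmeticFunction R) :
    χ.pmul f * χ.pmul g = χ.pmul (f * g) := by
  ext n
  rw [mul_apply, pmul_apply, mul_apply, mul_sum]
  refine sum_congr rfl fun x hx => ?_
  rw [pmul_apply, pmul_apply, ← (Nat.mem_divisorsAntidiagonal.mp hx).1, hχ]
  ring

theorem pdiv_mul_pdiv_of_map_mul [Semifield R] {χ : ArithmeticFunction R}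
    (hχ : ∀ a b : ℕ, χ (a * b) = χ a * χ b) (f g : ArithmeticFunction R) :
    f.pdiv χ * g.pdiv χ = (f * g).pdiv χ := by
  ext n
  rw [mul_apply, pdiv_apply, mul_apply, sum_div]
  refine sum_congr rfl fun x hx => ?_
  rw [pdiv_apply, pdiv_apply, ← (Nat.mem_divisorsAntidiagonal.mp hx).1, hχ, div_mul_div_comm]

theorem pmul_one_of_map_one [MulZeroOneClass R] {χ : ArithmeticFunction R} (hχ : χ 1 = 1) :
    χ.pmul (1 : ArithmeticFunction R) = 1 := by
  ext n
  rcases eq_or_ne n 1 with rfl | hn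
  · simp [hχ]
  · simp [one_apply_ne hn]

theorem one_pdiv_of_map_one [GroupWithZero R] {χ : ArithmeticFunction R} (hχ : χ 1 = 1) :
    (1 : ArithmeticFunction R).pdiv χ = 1 := by
  ext n
  rcases eq_or_ne n 1 with rfl | hn
  · simp [hχ]
  · simp [one_apply_ne hn]

theorem natCoe_id_mul [NonAssocSemiring R] (a b : ℕ) :
    (ι : ArithmeticFunction R) (a * b) = ι a * ι b := by
  simp

end CompletelyMultiplicativeWeight

variable {R : Type*} [Field R]

theorem moebius_mul_id_pdiv_id_mul_pmul_moebius_mul_zeta_pdiv_id :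
    (μ * ι : ArithmeticFunction R).pdiv ι * ((ι : ArithmeticFunction R).pmul μ * ζ).pdiv ι
      = 1 := by
  have id_mul_pmul_moebius :
      (ι : ArithmeticFunction R) * (ι : ArithmeticFunction R).pmul μ = 1 := by
    nth_rw 1 [← pmul_zeta (ι : ArithmeticFunction R)]
    rw [pmul_mul_pmul_of_map_mul natCoe_id_mul, coe_zeta_mul_coe_moebius,
      pmul_one_of_map_one (by simp)]
  rw [pdiv_mul_pdiv_of_map_mul natCoe_id_mul, mul_comm _ (ζ : ArithmeticFunction R),
    mul_mul_mul_comm, coe_moebius_mul_coe_zeta, one_mul, id_mul_pmul_moebius,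
    one_pdiv_of_map_one (by simp)]

theorem moebius_mul_id_pdiv_id_apply [CharZero R] (m : ℕ) :
    (μ * ι : ArithmeticFunction R).pdiv ι m = ∑ d ∈ m.divisors, (μ d : R) / d := by
  rw [pdiv_apply, mul_apply, sum_div,
    Nat.sum_divisorsAntidiagonal fun a b =>
      (μ : ArithmeticFunction R) a * (ι : ArithmeticFunction R) b / (ι : ArithmeticFunction R) m]
  refine sum_congr rfl fun d hd => ?_
  obtain ⟨hdm, hm⟩ := Nat.mem_divisors.mp hd
  have hd0 : (d : R) ≠ 0 := Nat.cast_ne_zero.mpr (Nat.pos_of_mem_divisors hd).ne'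
  have hm0 : (m : R) ≠ 0 := Nat.cast_ne_zero.mpr hm
  rw [intCoe_apply, natCoe_apply, natCoe_apply, id_apply, id_apply,
    Nat.cast_div hdm hd0]
  field_simp

theorem pmul_moebius_mul_zeta_pdiv_id_apply (m : ℕ) :
    ((ι : ArithmeticFunction R).pmul μ * ζ).pdiv ι m = ∑ d ∈ m.divisors, (d : R) * μ d / m := by
  rw [pdiv_apply, coe_mul_zeta_apply, sum_div]
  simp only [pmul_apply, natCoe_apply, id_apply, intCoe_apply]

end ArithmeticFunction

namespace PowerSeries

variable {R : Type*} [Semiring R]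

noncomputable def toArithmeticFunction (f : PowerSeries R) : ArithmeticFunction R :=
  ⟨fun n => if n = 0 then 0 else coeff n f, if_pos rfl⟩

theorem toArithmeticFunction_apply_of_ne_zero (f : PowerSeries R) {n : ℕ} (hn : n ≠ 0) :
    f.toArithmeticFunction n = coeff n f :=
  if_neg hn

theorem mul_toArithmeticFunction_apply (a : ArithmeticFunction R) (f : PowerSeries R) (n : ℕ) :
    (a * f.toArithmeticFunction) n = ∑ m ∈ n.divisors, a m * coeff (n / m) f := by
  rw [mul_apply, Nat.sum_divisorsAntidiagonal (fun m k => a m * f.toArithmeticFunction k)]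
  refine sum_congr rfl fun m hm => ?_
  have hnm : n / m ≠ 0 :=
    (Nat.div_pos (Nat.divisor_le hm) (Nat.pos_of_mem_divisors hm)).ne'
  rw [toArithmeticFunction_apply_of_ne_zero f hnm]

end PowerSeries

theorem moebius_inversion_power_series_general (g h : PowerSeries ℚ)
    (hgh : ∀ n : ℕ, 0 < n →
      coeff n g = ∑ m ∈ n.divisors,
        (∑ d ∈ m.divisors, (moebius d : ℚ) / d) * coeff (n / m) h) :
    ∀ n : ℕ, 0 < n →
      coeff n h = ∑ m ∈ n.divisors,
        (∑ d ∈ m.divisors, (d : ℚ) * (moebius d : ℚ) / m) * coeff (n / m) g := by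
  set A : ArithmeticFunction ℚ := (μ * ι : ArithmeticFunction ℚ).pdiv ι
  set B : ArithmeticFunction ℚ := ((ι : ArithmeticFunction ℚ).pmul μ * ζ).pdiv ι
  have hG : g.toArithmeticFunction = A * h.toArithmeticFunction := by
    ext n
    rcases n.eq_zero_or_pos with rfl | hn
    · simp
    rw [toArithmeticFunction_apply_of_ne_zero _ hn.ne', mul_toArithmeticFunction_apply,
      hgh n hn]
    simp only [A, moebius_mul_id_pdiv_id_apply]
  have hH : h.toArithmeticFunction = B * g.toArithmeticFunction := by
    rw [hG, ← mul_assoc, mul_comm B A, moebius_mul_id_pdiv_id_mul_pmul_moebius_mul_zeta_pdiv_id,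
      one_mul]
  intro n hn
  rw [← toArithmeticFunction_apply_of_ne_zero h hn.ne', hH,
    mul_toArithmeticFunction_apply]
  simp only [B, pmul_moebius_mul_zeta_pdiv_id_apply]

/-- Möbius inversion for the graded Euler characteristic: if
`g(x) = ∑_{m=1}^∞ h(x^m) · (∑_{d ∣ m} μ(d)/d)` as formal power series over `ℚ`
with `h(0) = 0` (stated coefficientwise: the coefficient of `x^n` in `h(x^m)`
is `h_{n/m}` when `m ∣ n` and `0` otherwise), then
`h(x) = ∑_{m=1}^∞ g(x^m) · (∑_{d ∣ m} d·μ(d)/m)`. -/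
theorem moebius_inversion_power_series (g h : PowerSeries ℚ)
    (hg0 : constantCoeff g = 0) (hh0 : constantCoeff h = 0)
    (hgh : ∀ n : ℕ, 0 < n →
      coeff n g = ∑ m ∈ n.divisors,
        (∑ d ∈ m.divisors, (moebius d : ℚ) / d) * coeff (n / m) h) :
    ∀ n : ℕ, 0 < n →
      coeff n h = ∑ m ∈ n.divisors,
        (∑ d ∈ m.divisors, (d : ℚ) * (moebius d : ℚ) / m) * coeff (n / m) g :=
  moebius_inversion_power_series_general g h hgh
end
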